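/- arXiv:1609.00944 — 16 statements merged into one kernel-verified Lean document; each statement's English description precedes it below -/
import Mathlib

section
/- If R is a reduced ring, then R is Armendariz: whenever f(x)g(x) = 0 in R[x], every coefficient a of f and b of g satisfy ab = 0. -/
section helpers
variable {R : Type*} [Ring R] [IsReduced R]

lemma red_swap {a b : R} (h : a * b = 0) : b * a = 0 := by
  have h2 : (b * a) ^ 2 = 0 := by
    have : b * a * (b * a) = b * (a * b) * a := by
      simp only [mul_assoc]
    rw [sq, this, h, mul_zero, zero_mul]
  exact IsNilpotent.eq_zero ⟨2, h2⟩

lemma red_mid {a b : R} (h : a * b = 0) (r : R) : a * r * b = 0 := by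
  have hba := red_swap h
  have h2 : (a * r * b) ^ 2 = 0 := by
    have : a * r * b * (a * r * b) = a * r * (b * a) * (r * b) := by
      simp only [mul_assoc]
    rw [sq, this, hba, mul_zero, zero_mul]
  exact IsNilpotent.eq_zero ⟨2, h2⟩

lemma red_sq_cancel {a b : R} (h : a * b * b = 0) : a * b = 0 := by
  have h1 : b * a * b = 0 := by
    have h2 : (b * a * b) ^ 2 = 0 := by
      have : b * a * b * (b * a * b) = b * (a * b * b) * (a * b) := by
        simp only [mul_assoc]
      rw [sq, this, h, mul_zero, zero_mul]
    exact IsNilpotent.eq_zero ⟨2, h2⟩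
  have h2 : (a * b) ^ 2 = 0 := by
    have : a * b * (a * b) = a * (b * a * b) := by simp only [mul_assoc]
    rw [sq, this, h1, mul_zero]
  exact IsNilpotent.eq_zero ⟨2, h2⟩

end helpers

theorem reduced_is_armendariz (R : Type*) [Ring R] [IsReduced R]
    (f g : Polynomial R) (h : f * g = 0) (i j : ℕ) :
    f.coeff i * g.coeff j = 0 := by
  set a := fun k => f.coeff k with ha
  set b := fun k => g.coeff k with hb
  suffices key : ∀ n, ∀ i j, i + j = n → a i * b j = 0 by
    exact key (i + j) i j rfl
  intro n
  induction n using Nat.strong_induction_on with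
  | _ n IH =>
    intro i j hij
    -- the coefficient sum
    have Sn : ∑ k ∈ Finset.range (n + 1), a k * b (n - k) = 0 := by
      have := congrArg (fun p => Polynomial.coeff p n) h
      simp only [Polynomial.coeff_mul, Polynomial.coeff_zero] at this
      rw [Finset.Nat.sum_antidiagonal_eq_sum_range_succ_mk] at this
      exact this
    -- extraction step
    have extract : ∀ m, m ≤ n →
        (∑ k ∈ Finset.range (m + 1), a k * b (n - k)) = 0 → a m * b (n - m) = 0 := by
      intro m hm hsum
      have h0 : (∑ k ∈ Finset.range (m + 1), a k * b (n - k)) * b (n - m) = 0 := by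
        rw [hsum, zero_mul]
      rw [Finset.sum_mul, Finset.sum_range_succ] at h0
      have hz : ∀ k ∈ Finset.range m, a k * b (n - k) * b (n - m) = 0 := by
        intro k hk
        have hk' : k < m := Finset.mem_range.mp hk
        have hlt : k + (n - m) < n := by omega
        have : a k * b (n - m) = 0 := IH (k + (n - m)) hlt k (n - m) rfl
        exact red_mid this _
      rw [Finset.sum_eq_zero hz, zero_add] at h0
      exact red_sq_cancel h0
    -- downward induction: partial sums vanish and top terms are zero
    have main : ∀ d, d ≤ n →
        (∑ k ∈ Finset.range (n - d + 1), a k * b (n - k)) = 0 ∧ a (n - d) * b d = 0 := by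
      intro d
      induction d with
      | zero =>
        intro _
        have hs : (∑ k ∈ Finset.range (n - 0 + 1), a k * b (n - k)) = 0 := by
          simpa using Sn
        refine ⟨hs, ?_⟩
        have := extract (n - 0) (by omega) hs
        simpa using this
      | succ d hd =>
        intro hdn
        obtain ⟨hs, ht⟩ := hd (by omega)
        have hsub : n - d = (n - (d + 1)) + 1 := by omega
        have hs' : (∑ k ∈ Finset.range (n - (d + 1) + 1), a k * b (n - k)) = 0 := by
          rw [hsub] at hs
          rw [Finset.sum_range_succ] at hs
          have : n - (n - (d + 1) + 1) = d := by omega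
          rw [this] at hs
          have hidx : n - (d + 1) + 1 = n - d := by omega
          rw [hidx, ht, add_zero] at hs
          rw [show n - (d + 1) + 1 = n - d by omega]
          exact hs
        refine ⟨hs', ?_⟩
        have := extract (n - (d + 1)) (by omega) hs'
        have hnk : n - (n - (d + 1)) = d + 1 := by omega
        rw [hnk] at this
        exact this
    -- finish
    have hin : i = n - j := by omega
    have := (main j (by omega)).2
    rw [hin]
    have hnj : n - j = i := by omega
    rw [hnj] at this ⊢
    exact this
end

section
/- A ring R is weakly semicommutative if and only if the polynomial ring R[x] is weakly semicommutative, under the assumption that R is Armendariz. -/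
def WeaklySemicommutative (R : Type*) [Ring R] : Prop :=
  ∀ a b : R, a * b = 0 → ∀ r : R, IsNilpotent (a * r * b)

def IsArmendariz (R : Type*) [Ring R] : Prop :=
  ∀ f g : Polynomial R, f * g = 0 → ∀ i j : ℕ, f.coeff i * g.coeff j = 0

/-!
A zero product in an Armendariz ring stays zero when a nilpotent `z` is inserted: `1 - zX` is a
unit of `R[X]`, and the Armendariz condition applied to `(a (1 - zX)⁻¹) ((1 - zX) b) = ab = 0`
gives `a z b = 0`. Hence a word in nilpotent letters vanishes once some letter `y` occurs `k`
times with `y ^ k = 0`, so by pigeonhole all long words over a finite set `s` of nilpotents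
vanish, and a polynomial whose coefficients are `ℕ`-combinations of elements of `s` is nilpotent.

If `fg = 0` in `R[X]`, the coefficients of `fhg` are such combinations of the products
`fᵢ hⱼ gₗ`, which are nilpotent when `R` is weakly semicommutative since `fᵢ gₗ = 0`.
The converse restricts to constant polynomials.
-/

open Polynomial
open scoped Pointwise

section

variable {R : Type*} [Ring R]

namespace Polynomial

theorem coeff_mem_span_coeffs (p : R[X]) (n : ℕ) :
    p.coeff n ∈ Submodule.span ℕ (p.coeffs : Set R) := by
  by_cases h : p.coeff n = 0
  · rw [h]
    exact zero_mem _
  · exact Submodule.subset_span (coeff_mem_coeffs h)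

theorem coeff_mul_mem_mul {M N : Submodule ℕ R} {f g : R[X]} (hf : ∀ n, f.coeff n ∈ M)
    (hg : ∀ n, g.coeff n ∈ N) (n : ℕ) : (f * g).coeff n ∈ M * N := by
  rw [coeff_mul]
  exact sum_mem fun x _ => Submodule.mul_mem_mul (hf x.1) (hg x.2)

theorem coeff_pow_mem_pow {M : Submodule ℕ R} {f : R[X]} (hf : ∀ n, f.coeff n ∈ M) (m n : ℕ) :
    (f ^ m).coeff n ∈ M ^ m := by
  induction m generalizing n with
  | zero =>
    rw [pow_zero, pow_zero, coeff_one]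
    split_ifs
    · exact Submodule.mem_one.mpr ⟨1, map_one _⟩
    · exact zero_mem _
  | succ m ih =>
    rw [pow_succ, pow_succ]
    exact coeff_mul_mem_mul ih hf n

end Polynomial

namespace IsArmendariz

theorem mul_mul_eq_zero_of_isNilpotent (hA : IsArmendariz R) {a b z : R} (hab : a * b = 0)
    (hz : IsNilpotent z) : a * z * b = 0 := by
  obtain ⟨n, hn⟩ := hz
  -- `n + 2` terms, so that the coefficient of `X` in the inverse `u` of `1 - zX` is `z`
  have hn2 : z ^ (n + 2) = 0 := pow_eq_zero_of_le (by omega) hn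
  set u : R[X] := ∑ i ∈ Finset.range (n + 2), (C z * X) ^ i
  have hpow : (C z * X) ^ (n + 2) = 0 := by
    rw [(commute_X (C z)).symm.mul_pow, ← C_pow, hn2, C_0, zero_mul]
  have hfg : (C a * u) * ((1 - C z * X) * C b) = 0 := by
    rw [mul_assoc, ← mul_assoc u, geom_sum_mul_neg, hpow, sub_zero, one_mul, ← C_mul, hab, C_0]
  have hu : u.coeff 1 = z := by
    simp only [u, finsetSum_coeff, (commute_X (C z)).symm.mul_pow, ← C_pow, coeff_C_mul_X_pow]
    simp
  simpa [coeff_C_mul, coeff_mul_C, hu, ← mul_assoc] using hA _ _ hfg 1 0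

theorem mul_prod_eq_zero_of_sublist (hA : IsArmendariz R) {s w : List R} (hsw : s.Sublist w)
    (hw : ∀ z ∈ w, IsNilpotent z) {x : R} (hx : x * s.prod = 0) : x * w.prod = 0 := by
  induction hsw generalizing x with
  | slnil => exact hx
  | cons a _ ih =>
    simp only [List.forall_mem_cons] at hw
    rw [List.prod_cons, ← mul_assoc]
    exact hA.mul_mul_eq_zero_of_isNilpotent (ih hw.2 hx) hw.1
  | cons_cons a _ ih =>
    simp only [List.forall_mem_cons] at hw
    rw [List.prod_cons, ← mul_assoc] at hx ⊢
    exact ih hw.2 hx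

theorem prod_ofFn_eq_zero (hA : IsArmendariz R) {ι : Type*} [Fintype ι] {a : ι → R} {k n : ℕ}
    (ha : ∀ i, a i ^ k = 0) (hn : Fintype.card ι * k < n) (σ : Fin n → ι) :
    (List.ofFn (a ∘ σ)).prod = 0 := by
  classical
  obtain ⟨i, hi⟩ := Fintype.exists_lt_card_fiber_of_mul_lt_card σ (by rwa [Fintype.card_fin])
  have hcount : (Finset.univ.filter fun t => σ t = i).card = (List.ofFn σ).count i := by
    rw [← Multiset.coe_count, ← Fin.univ_val_map, Multiset.count_map, Finset.card_def,
      Finset.filter_val]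
    simp only [eq_comm]
  have hsub : (List.replicate k (a i)).Sublist (List.ofFn (a ∘ σ)) := by
    rw [← List.map_replicate, ← List.map_ofFn]
    exact (List.replicate_sublist_iff.mpr (by omega)).map a
  have hnil : ∀ z ∈ List.ofFn (a ∘ σ), IsNilpotent z := by
    simp only [List.mem_ofFn, forall_exists_index]
    rintro _ t rfl
    exact ⟨k, ha _⟩
  simpa using hA.mul_prod_eq_zero_of_sublist hsub hnil (x := 1)
    (by rw [one_mul, List.prod_replicate, ha])

theorem isNilpotent_of_coeff_mem_span (hA : IsArmendariz R) {s : Finset R}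
    (hs : ∀ y ∈ s, IsNilpotent y) {f : R[X]}
    (hf : ∀ n, f.coeff n ∈ Submodule.span ℕ (s : Set R)) : IsNilpotent f := by
  obtain ⟨k, hk⟩ : ∃ k, ∀ y ∈ s, y ^ k = 0 :=
    ⟨s.sup fun y => nilpotencyClass y,
      fun y hy => pow_eq_zero_of_le (Finset.le_sup hy) (pow_nilpotencyClass (hs y hy))⟩
  have hwords : Submodule.span ℕ ((s : Set R) ^ (s.card * k + 1)) = ⊥ := by
    refine Submodule.span_eq_bot.mpr fun a ha => ?_
    obtain ⟨σ, rfl⟩ := Set.mem_pow.mp ha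
    exact hA.prod_ofFn_eq_zero (a := ((↑) : s → R)) (fun y => hk y y.2) (by simp) σ
  refine ⟨s.card * k + 1, Polynomial.ext fun n => ?_⟩
  simpa [Submodule.span_pow, hwords] using coeff_pow_mem_pow hf (s.card * k + 1) n

end IsArmendariz

theorem WeaklySemicommutative.of_injective {S : Type*} [Ring S] (φ : R →+* S)
    (hφ : Function.Injective φ) (hS : WeaklySemicommutative S) : WeaklySemicommutative R := by
  intro a b hab r
  rw [← IsNilpotent.map_iff hφ, map_mul, map_mul]
  exact hS _ _ (by rw [← map_mul, hab, map_zero]) _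

theorem WeaklySemicommutative.polynomial (hA : IsArmendariz R) (hR : WeaklySemicommutative R) :
    WeaklySemicommutative R[X] := by
  classical
  intro f g hfg h
  refine hA.isNilpotent_of_coeff_mem_span (s := f.coeffs * h.coeffs * g.coeffs) ?_ fun n => ?_
  · simp only [Finset.mem_mul, mem_coeffs_iff]
    rintro _ ⟨_, ⟨_, ⟨i, -, rfl⟩, _, ⟨j, -, rfl⟩, rfl⟩, _, ⟨l, -, rfl⟩, rfl⟩
    exact hR _ _ (hA f g hfg i l) _
  · rw [Finset.coe_mul, Finset.coe_mul, ← Submodule.span_mul_span, ← Submodule.span_mul_span]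
    exact coeff_mul_mem_mul (coeff_mul_mem_mul (coeff_mem_span_coeffs f) (coeff_mem_span_coeffs h))
      (coeff_mem_span_coeffs g) n

end

theorem weaklySemicommutative_iff_polynomial (R : Type*) [Ring R]
    (hA : IsArmendariz R) :
    WeaklySemicommutative R ↔ WeaklySemicommutative (Polynomial R) :=
  ⟨WeaklySemicommutative.polynomial hA, WeaklySemicommutative.of_injective C C_injective⟩
end

section
/- Let K be an ideal of a ring R such that every element of R \ K is regular (a non-zero-divisor) and K^2 = 0. Then R is weakly semicommutative: for all a, b in R with ab = 0 and any r in R, (arb)^2 = 0. -/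
theorem weaklySemicommutative_of_ideal (R : Type*) [Ring R] (K : Ideal R)
    (hreg : ∀ x : R, x ∉ K → (∀ y : R, x * y = 0 → y = 0) ∧ (∀ y : R, y * x = 0 → y = 0))
    (hK2 : ∀ x ∈ K, ∀ y ∈ K, x * y = 0) :
    ∀ a b : R, a * b = 0 → ∀ r : R, (a * r * b) ^ 2 = 0 := by
  intro a b hab r
  by_cases ha : a ∈ K
  · by_cases hb : b ∈ K
    · have hba : b * a = 0 := hK2 b hb a ha
      have : (a * r * b) ^ 2 = a * r * (b * a) * (r * b) := by
        rw [sq]; noncomm_ring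
      rw [this, hba, mul_zero, zero_mul]
    · have : a = 0 := (hreg b hb).2 a hab
      simp [this]
  · have : b = 0 := (hreg a ha).1 b hab
    simp [this]
end

section
/- Let I be a reduced ideal of a ring R (i.e., I contains no nonzero nilpotent elements of R, viewed as a ring without identity) such that R/I is weakly semicommutative. Then R is weakly semicommutative: for all a, b in R with ab = 0 and all r in R, arb is nilpotent. -/
theorem weaklySemicommutative_of_reduced_kernel (R Q : Type*) [Ring R] [Ring Q]
    (φ : R →+* Q) (hsurj : Function.Surjective φ)
    (hred : ∀ x : R, φ x = 0 → x * x = 0 → x = 0)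
    (hQ : WeaklySemicommutative Q) :
    WeaklySemicommutative R := by
  intro a b hab r
  obtain ⟨n, hn⟩ := hQ (φ a) (φ b) (by rw [← map_mul, hab, map_zero]) (φ r)
  set c := a * r * b with hc
  set x := c ^ n with hx
  have hφx : φ x = 0 := by
    rw [hx, map_pow, hc, map_mul, map_mul, hn]
  have hbxa : b * x * a = 0 := by
    apply hred _ (by rw [map_mul, map_mul, hφx, mul_zero, zero_mul])
    calc b * x * a * (b * x * a) = b * x * (a * b) * x * a := by noncomm_ring
    _ = 0 := by rw [hab]; noncomm_ring
  refine ⟨n + 2, ?_⟩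
  have : c ^ (n + 2) = c * x * c := by
    rw [hx, pow_succ, pow_succ']
  rw [this, hc]
  calc a * r * b * x * (a * r * b) = a * r * (b * x * a) * r * b := by noncomm_ring
  _ = 0 := by rw [hbxa]; noncomm_ring
end

section
/- Let S be a multiplicatively closed set of central regular elements of a ring R. If R is weakly semicommutative, then the localization S^{-1}R is weakly semicommutative. -/
/-- `Q` plays the role of the localization `S⁻¹R` of `R` at a multiplicatively closed
set `S` of central regular elements, witnessed by the ring hom `φ`. -/
theorem weaklySemicommutative_localization (R Q : Type*) [Ring R] [Ring Q]
    (S : Submonoid R)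
    (hcen : ∀ s ∈ S, ∀ r : R, s * r = r * s)
    (hregS : ∀ s ∈ S, ∀ x : R, (s * x = 0 → x = 0) ∧ (x * s = 0 → x = 0))
    (φ : R →+* Q)
    (hunit : ∀ s ∈ S, IsUnit (φ s))
    (hinj : ∀ x : R, φ x = 0 → x = 0)
    (hloc : ∀ q : Q, ∃ s ∈ S, ∃ a : R, φ s * q = φ a)
    (hR : WeaklySemicommutative R) :
    WeaklySemicommutative Q := by
  -- images of S are central in Q
  have hcenQ : ∀ s ∈ S, ∀ q : Q, φ s * q = q * φ s := by
    intro s hs q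
    obtain ⟨t, ht, a, hta⟩ := hloc q
    refine (hunit t ht).mul_left_cancel ?_
    calc φ t * (φ s * q) = φ s * (φ t * q) := by
          rw [← mul_assoc, ← map_mul, ← hcen s hs t, map_mul, mul_assoc]
      _ = φ s * φ a := by rw [hta]
      _ = φ a * φ s := by rw [← map_mul, hcen s hs a, map_mul]
      _ = (φ t * q) * φ s := by rw [hta]
      _ = φ t * (q * φ s) := by rw [mul_assoc]
  intro a b hab r
  obtain ⟨s, hs, a₀, hsa⟩ := hloc a
  obtain ⟨t, ht, b₀, htb⟩ := hloc b
  obtain ⟨u, hu, r₀, hur⟩ := hloc r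
  -- a₀ * b₀ = 0 in R
  have hab₀ : a₀ * b₀ = 0 := by
    apply hinj
    have : φ a₀ * φ b₀ = 0 := by
      rw [← hsa, ← htb]
      calc φ s * a * (φ t * b) = φ s * (a * φ t) * b := by simp [mul_assoc]
        _ = φ s * (φ t * a) * b := by rw [← hcenQ t ht a]
        _ = φ s * φ t * (a * b) := by simp [mul_assoc]
        _ = 0 := by rw [hab, mul_zero]
    rw [map_mul, this]
  obtain ⟨n, hn⟩ := hR a₀ b₀ hab₀ r₀
  -- clear denominators
  set c : Q := φ s * φ u * φ t with hc
  have hcu : IsUnit c := ((hunit s hs).mul (hunit u hu)).mul (hunit t ht)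
  have hccen : ∀ q : Q, c * q = q * c := by
    intro q
    rw [hc, mul_assoc, mul_assoc, hcenQ t ht q, ← mul_assoc (φ u), hcenQ u hu q,
      ← mul_assoc, ← mul_assoc, hcenQ s hs q, mul_assoc, mul_assoc, mul_assoc]
  have key : c * (a * r * b) = φ (a₀ * r₀ * b₀) := by
    rw [map_mul, map_mul, ← hsa, ← htb, ← hur, hc]
    symm
    calc φ s * a * (φ u * r) * (φ t * b)
        = φ s * (a * φ u) * r * (φ t * b) := by simp [mul_assoc]
      _ = φ s * (φ u * a) * r * (φ t * b) := by rw [← hcenQ u hu a]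
      _ = (φ s * φ u) * (a * r * φ t) * b := by simp [mul_assoc]
      _ = (φ s * φ u) * (φ t * (a * r)) * b := by rw [hcenQ t ht (a * r)]
      _ = φ s * φ u * φ t * (a * r * b) := by simp [mul_assoc]
  have hcomm : Commute c (a * r * b) := hccen (a * r * b)
  refine ⟨n, (hcu.pow n).mul_left_cancel ?_⟩
  rw [mul_zero, ← hcomm.mul_pow, key, ← map_pow, hn, map_zero]
end

section
/- Every semicommutative ring is strongly nil-IFP: if f(x)g(x) = 0 in R[x] with R semicommutative, then for every coefficient a of f, every coefficient b of g, and every r in R, the element arb is nilpotent. -/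
/-!
Nilpotency of `aᵢ bⱼ` is proved by induction on `(i + j, j)`, lexicographically: multiplying the
`(i + j)`-th coefficient of `f * g = 0` on the left by `bⱼ` writes `bⱼ aᵢ bⱼ` as minus a sum of
terms that are nilpotent by induction, and then so is `(aᵢ bⱼ)² = aᵢ (bⱼ aᵢ bⱼ)`. This uses that
in a semicommutative ring the nilpotent elements are closed under sums and under multiplication
on either side, which follows by inserting factors one at a time into a vanishing product
`P * xⁿ = 0`. Finally `aᵢ r bⱼ` is nilpotent because `r bⱼ aᵢ` is.
-/

def StronglyNilIFP (R : Type*) [Ring R] : Prop :=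
  ∀ f g : Polynomial R, f * g = 0 →
    ∀ i j : ℕ, ∀ r : R, IsNilpotent (f.coeff i * r * g.coeff j)

open Polynomial Finset

theorem isNilpotent_mul_comm {M : Type*} [MonoidWithZero M] {x y : M}
    (h : IsNilpotent (x * y)) : IsNilpotent (y * x) := by
  obtain ⟨n, hn⟩ := h
  exact ⟨n + 1, by rw [pow_succ, ← mul_assoc, mul_pow_mul, hn, mul_zero, zero_mul]⟩

def Semicommutative (R : Type*) [MonoidWithZero R] : Prop :=
  ∀ a b : R, a * b = 0 → ∀ r : R, a * r * b = 0

namespace Semicommutative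

section MonoidWithZero

variable {R : Type*} [MonoidWithZero R] (hR : Semicommutative R)
include hR

theorem mul_mul_pow_eq_zero {P x : R} (r : R) {n : ℕ} (h : P * x ^ n = 0) :
    P * (r * x) ^ n = 0 := by
  induction n generalizing P with
  | zero => simpa using h
  | succ n ih =>
    have h' : P * r * x * x ^ n = 0 := by
      rw [pow_succ'] at h
      simpa only [mul_assoc] using hR _ _ h r
    simpa only [pow_succ', mul_assoc] using ih h'

theorem isNilpotent_mul_left (x : R) {y : R} (h : IsNilpotent y) : IsNilpotent (x * y) := by
  obtain ⟨n, hn⟩ := h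
  have h := hR.mul_mul_pow_eq_zero x ((one_mul _).trans hn)
  exact ⟨n, by rwa [one_mul] at h⟩

theorem isNilpotent_mul_right {x : R} (h : IsNilpotent x) (y : R) : IsNilpotent (x * y) :=
  isNilpotent_mul_comm (hR.isNilpotent_mul_left y h)

theorem isNilpotent_mul_mul {a b : R} (h : IsNilpotent (a * b)) (r : R) :
    IsNilpotent (a * r * b) := by
  have hrba : IsNilpotent (r * b * a) := by
    simpa only [mul_assoc] using hR.isNilpotent_mul_left r (isNilpotent_mul_comm h)
  simpa only [mul_assoc] using isNilpotent_mul_comm hrba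

end MonoidWithZero

section Semiring

variable {R : Type*} [Semiring R] (hR : Semicommutative R)
include hR

theorem mul_add_pow_eq_zero {P a b : R} {j k : ℕ} (ha : P * a ^ j = 0) (hb : P * b ^ k = 0) :
    P * (a + b) ^ (j + k) = 0 := by
  induction j generalizing P k with
  | zero => simp_all
  | succ j ihj =>
    induction k generalizing P with
    | zero => simp_all
    | succ k ihk =>
      have hPa : P * a * (a + b) ^ (j + (k + 1)) = 0 :=
        ihj (by rwa [mul_assoc, ← pow_succ']) (hR _ _ hb a)
      have hPb : P * b * (a + b) ^ (j + 1 + k) = 0 :=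
        ihk (hR _ _ ha b) (by rwa [mul_assoc, ← pow_succ'])
      calc P * (a + b) ^ (j + 1 + (k + 1))
          = P * a * (a + b) ^ (j + (k + 1)) + P * b * (a + b) ^ (j + 1 + k) := by
            rw [show j + 1 + (k + 1) = j + (k + 1) + 1 by omega, pow_succ',
              show j + (k + 1) = j + 1 + k by omega]
            noncomm_ring
        _ = 0 := by rw [hPa, hPb, add_zero]

theorem isNilpotent_add {a b : R} (ha : IsNilpotent a) (hb : IsNilpotent b) :
    IsNilpotent (a + b) := by
  obtain ⟨j, hj⟩ := ha
  obtain ⟨k, hk⟩ := hb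
  have h := hR.mul_add_pow_eq_zero ((one_mul _).trans hj) ((one_mul _).trans hk)
  exact ⟨j + k, by rwa [one_mul] at h⟩

theorem isNilpotent_sum {ι : Type*} {s : Finset ι} {f : ι → R}
    (h : ∀ i ∈ s, IsNilpotent (f i)) : IsNilpotent (∑ i ∈ s, f i) :=
  Finset.sum_induction f IsNilpotent (fun _ _ => hR.isNilpotent_add) IsNilpotent.zero h

end Semiring

section Ring

variable {R : Type*} [Ring R] (hR : Semicommutative R)
include hR

theorem isNilpotent_of_sum_eq_zero {ι : Type*} [DecidableEq ι] {s : Finset ι} {f : ι → R}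
    {i : ι} (hi : i ∈ s) (hsum : ∑ k ∈ s, f k = 0) (h : ∀ k ∈ s.erase i, IsNilpotent (f k)) :
    IsNilpotent (f i) := by
  rw [← add_sum_erase s f hi, add_eq_zero_iff_eq_neg] at hsum
  exact hsum ▸ (hR.isNilpotent_sum h).neg

theorem isNilpotent_coeff_mul_coeff_of_mul_eq_zero {f g : R[X]} (hfg : f * g = 0) (i j : ℕ) :
    IsNilpotent (f.coeff i * g.coeff j) := by
  have hsum : ∑ x ∈ antidiagonal (i + j), g.coeff j * (f.coeff x.1 * g.coeff x.2) = 0 := by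
    rw [← mul_sum, ← coeff_mul, hfg, coeff_zero, mul_zero]
  have hterm : ∀ x ∈ (antidiagonal (i + j)).erase (i, j),
      IsNilpotent (g.coeff j * (f.coeff x.1 * g.coeff x.2)) := by
    rintro ⟨p, q⟩ hmem
    have hne : (p, q) ≠ (i, j) := ne_of_mem_erase hmem
    have hpq : p + q = i + j := mem_antidiagonal.mp (mem_of_mem_erase hmem)
    rcases lt_trichotomy q j with hq | rfl | hq
    · exact hR.isNilpotent_mul_left _ (isNilpotent_coeff_mul_coeff_of_mul_eq_zero hfg p q)
    · exact absurd (by rw [show p = i by omega]) hne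
    · have hba : IsNilpotent (g.coeff j * f.coeff p) :=
        isNilpotent_mul_comm (isNilpotent_coeff_mul_coeff_of_mul_eq_zero hfg p j)
      simpa only [mul_assoc] using hR.isNilpotent_mul_right hba (g.coeff q)
  have hbab := hR.isNilpotent_of_sum_eq_zero (i := (i, j)) (mem_antidiagonal.mpr rfl) hsum hterm
  refine IsNilpotent.of_pow (m := 2) ?_
  simpa only [sq, mul_assoc] using hR.isNilpotent_mul_left (f.coeff i) hbab
termination_by (i + j, j)
decreasing_by all_goals (rw [Prod.lex_def]; omega)

end Ring

end Semicommutative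

theorem semicommutative_stronglyNilIFP (R : Type*) [Ring R]
    (hsc : ∀ a b : R, a * b = 0 → ∀ r : R, a * r * b = 0) :
    StronglyNilIFP R := by
  have hR : Semicommutative R := hsc
  intro f g hfg i j r
  exact hR.isNilpotent_mul_mul (hR.isNilpotent_coeff_mul_coeff_of_mul_eq_zero hfg i j) r
end

section
/- If R is a strongly nil-IFP ring with no nonzero nil one-sided ideals, then R is reversible: ab = 0 implies ba = 0 for all a, b in R. -/
lemma isNilpotent_swap {R : Type*} [Ring R] {x y : R}
    (h : IsNilpotent (x * y)) : IsNilpotent (y * x) := by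
  obtain ⟨n, hn⟩ := h
  refine ⟨n + 1, ?_⟩
  have key : ∀ m : ℕ, (y * x) ^ (m + 1) = y * (x * y) ^ m * x := by
    intro m
    induction m with
    | zero => simp [pow_succ, mul_assoc]
    | succ k ih => rw [pow_succ, ih, pow_succ]; simp [mul_assoc]
  rw [key, hn, mul_zero, zero_mul]

theorem stronglyNilIFP_reversible (R : Type*) [Ring R]
    (h : StronglyNilIFP R)
    (hleft : ∀ I : Submodule R R, (∀ x ∈ I, IsNilpotent x) → I = ⊥)
    (hright : ∀ I : Submodule Rᵐᵒᵖ R, (∀ x ∈ I, IsNilpotent x) → I = ⊥) :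
    ∀ a b : R, a * b = 0 → b * a = 0 := by
  intro a b hab
  have hnil : ∀ r : R, IsNilpotent (a * r * b) := by
    intro r
    have := h (Polynomial.C a) (Polynomial.C b) (by
      rw [← Polynomial.C_mul, hab, Polynomial.C_0]) 0 0 r
    simpa using this
  have key : Submodule.span R {b * a} = ⊥ := by
    apply hleft
    intro x hx
    rw [Submodule.mem_span_singleton] at hx
    obtain ⟨r, rfl⟩ := hx
    have h1 : IsNilpotent (a * (r * b)) := by simpa [mul_assoc] using hnil r
    have h2 := isNilpotent_swap h1
    simpa [smul_eq_mul, mul_assoc] using h2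
  have : b * a ∈ (⊥ : Submodule R R) := key ▸ Submodule.mem_span_singleton_self _
  simpa using this
end

section
/- Every 2-primal ring is strongly nil-IFP: if R is 2-primal and f(x)g(x) = 0 in R[x], then arb is nilpotent for every coefficient a of f, b of g, and every r in R. -/
/-- A two-sided ideal is prime if it is proper and `aRb ⊆ P` implies `a ∈ P` or `b ∈ P`. -/
def IsPrimeTwoSided {R : Type*} [Ring R] (P : TwoSidedIdeal R) : Prop :=
  (P : Set R) ≠ Set.univ ∧ ∀ a b : R, (∀ r : R, a * r * b ∈ P) → a ∈ P ∨ b ∈ P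

/-- The prime radical (lower nilradical) `N_*(R)`: the intersection of all prime
two-sided ideals. -/
def primeRadical (R : Type*) [Ring R] : Set R :=
  { x | ∀ P : TwoSidedIdeal R, IsPrimeTwoSided P → x ∈ P }

/-- A ring is 2-primal if its prime radical equals its set of nilpotent elements. -/
def IsTwoPrimal (R : Type*) [Ring R] : Prop :=
  primeRadical R = { x : R | IsNilpotent x }

section Aux

variable {R : Type*} [Ring R] (N : Set R)
  (h0 : (0 : R) ∈ N)
  (hsub : ∀ a b : R, a ∈ N → b ∈ N → a - b ∈ N)
  (hadd : ∀ a b : R, a ∈ N → b ∈ N → a + b ∈ N)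
  (hl : ∀ r a : R, a ∈ N → r * a ∈ N)
  (hr : ∀ r a : R, a ∈ N → a * r ∈ N)
  (hsq : ∀ a : R, a * a ∈ N → a ∈ N)

include hl hr hsq in
lemma aux_swap : ∀ a b : R, a * b ∈ N → b * a ∈ N := by
  intro a b hab
  apply hsq
  have : b * a * (b * a) = b * (a * b * a) := by simp [mul_assoc]
  rw [this]
  exact hl b _ (hr a _ hab)

include hl hr hsq in
lemma aux_mid : ∀ a r b : R, a * b ∈ N → a * r * b ∈ N := by
  intro a r b hab
  apply hsq
  have : a * r * b * (a * r * b) = (a * r) * ((b * a) * (r * b)) := by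
    simp [mul_assoc]
  rw [this]
  exact hl _ _ (hr _ _ (aux_swap N hl hr hsq a b hab))

include hl hr hsq in
lemma aux_drop : ∀ a b : R, a * b * b ∈ N → a * b ∈ N := by
  intro a b habb
  apply hsq
  have h1 : b * (a * b) ∈ N := aux_swap N hl hr hsq (a * b) b habb
  have : a * b * (a * b) = a * (b * (a * b)) := by simp [mul_assoc]
  rw [this]
  exact hl a _ h1

include h0 hsub hadd hl hr hsq in
lemma armendariz_aux (f g : Polynomial R) (hfg : f * g = 0) :
    ∀ i j : ℕ, f.coeff i * g.coeff j ∈ N := by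
  have hmid := aux_mid N hl hr hsq
  have hdrop := aux_drop N hl hr hsq
  have key : ∀ k : ℕ, ∀ i j : ℕ, i + j = k → f.coeff i * g.coeff j ∈ N := by
    intro k
    induction k using Nat.strong_induction_on with
    | _ k IH =>
      have hcoeff : (∑ i ∈ Finset.range (k + 1), f.coeff i * g.coeff (k - i)) = 0 := by
        have := Polynomial.coeff_mul f g k
        rw [hfg, Polynomial.coeff_zero] at this
        rw [← Finset.Nat.sum_antidiagonal_eq_sum_range_succ_mk (fun p => f.coeff p.1 * g.coeff p.2) k]
        exact this.symm
      -- peel : from the partial sum in N, extract the top term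
      have peel : ∀ t : ℕ, t ≤ k →
          (∑ i ∈ Finset.range (k - t + 1), f.coeff i * g.coeff (k - i)) ∈ N →
          f.coeff (k - t) * g.coeff t ∈ N := by
        intro t ht hs
        have h1 : (∑ i ∈ Finset.range (k - t + 1), f.coeff i * g.coeff (k - i)) * g.coeff t ∈ N :=
          hr _ _ hs
        rw [Finset.sum_mul, Finset.sum_range_succ] at h1
        have h3 : (∑ i ∈ Finset.range (k - t), f.coeff i * g.coeff (k - i) * g.coeff t) ∈ N := by
          refine Finset.sum_induction _ (· ∈ N) hadd h0 ?_
          intro i hi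
          have hik : i < k - t := Finset.mem_range.mp hi
          have hib : f.coeff i * g.coeff t ∈ N := IH (i + t) (by omega) i t rfl
          exact hmid _ _ _ hib
        have h4 : f.coeff (k - t) * g.coeff (k - (k - t)) * g.coeff t ∈ N := by
          have := hsub _ _ h1 h3
          simpa using this
        rw [show k - (k - t) = t by omega] at h4
        exact hdrop _ _ h4
      have C : ∀ t : ℕ, t ≤ k + 1 →
          (∑ i ∈ Finset.range (k + 1 - t), f.coeff i * g.coeff (k - i)) ∈ N := by
        intro t
        induction t with
        | zero => intro _; simpa [hcoeff] using h0
        | succ t iht =>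
          intro ht
          have ht' : t ≤ k := by omega
          have hs := iht (by omega)
          rw [show k + 1 - t = k - t + 1 by omega] at hs
          have top := peel t ht' hs
          have := hsub _ _ hs top
          rw [Finset.sum_range_succ] at this
          rw [show k - (k - t) = t by omega] at this
          rw [show k + 1 - (t + 1) = k - t by omega]
          simpa using this
      intro i j hij
      have hjk : j ≤ k := by omega
      have hs := C j (by omega)
      rw [show k + 1 - j = k - j + 1 by omega] at hs
      have := peel j hjk hs
      rwa [show k - j = i by omega] at this
  intro i j
  exact key (i + j) i j rfl

end Aux

theorem twoPrimal_stronglyNilIFP (R : Type*) [Ring R]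
    (h : IsTwoPrimal R) : StronglyNilIFP R := by
  intro f g hfg i j r
  set N : Set R := { x : R | IsNilpotent x } with hN
  have hmemN : ∀ x : R, x ∈ N ↔ x ∈ primeRadical R := by
    intro x; rw [h]
  have h0 : (0 : R) ∈ N := ⟨1, by simp⟩
  have hl : ∀ r a : R, a ∈ N → r * a ∈ N := by
    intro r a ha
    rw [hmemN] at ha ⊢
    intro P hP
    exact P.mul_mem_left _ _ (ha P hP)
  have hr' : ∀ r a : R, a ∈ N → a * r ∈ N := by
    intro r a ha
    rw [hmemN] at ha ⊢
    intro P hP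
    exact P.mul_mem_right _ _ (ha P hP)
  have hadd : ∀ a b : R, a ∈ N → b ∈ N → a + b ∈ N := by
    intro a b ha hb
    rw [hmemN] at ha hb ⊢
    intro P hP
    exact P.add_mem (ha P hP) (hb P hP)
  have hsub : ∀ a b : R, a ∈ N → b ∈ N → a - b ∈ N := by
    intro a b ha hb
    rw [hmemN] at ha hb ⊢
    intro P hP
    exact P.sub_mem (ha P hP) (hb P hP)
  have hsq : ∀ a : R, a * a ∈ N → a ∈ N := by
    rintro a ⟨n, hn⟩
    refine ⟨2 * n, ?_⟩
    rw [pow_mul]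
    simpa [sq] using hn
  have hab : f.coeff i * g.coeff j ∈ N :=
    armendariz_aux N h0 hsub hadd hl hr' hsq f g hfg i j
  exact aux_mid N hl hr' hsq _ r _ hab
end

section
/- Let R be a 2-primal ring and suppose f(x)·R[x]·g(x) ⊆ N_*(R)[x] for polynomials f, g ∈ R[x]. Then aRb ⊆ N_*(R) for every coefficient a of f and b of g. -/
/-! The hypotheses only involve the prime ideals containing the prime radical, so it suffices
to work modulo a single prime ideal `P`. There, McCoy's minimal-index argument applies: if `f`
and `g` both had a coefficient outside `P`, take the first ones, `f_m` and `g_n`. Every other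
term of the coefficient of `x^(m+n)` in `f · s · g` has a factor `f_i` with `i < m` or `g_j`
with `j < n`, hence lies in `P`, so `f_m s g_n ∈ P` for all `s`, contradicting primeness. -/

open Polynomial

theorem coeff_mul_C_mul_sub_mem {R : Type*} [Ring R] (P : TwoSidedIdeal R) {f g : R[X]}
    {m n : ℕ} (hf : ∀ i < m, f.coeff i ∈ P) (hg : ∀ j < n, g.coeff j ∈ P) (s : R) :
    (f * C s * g).coeff (m + n) - f.coeff m * s * g.coeff n ∈ P := by
  have hmn : (m, n) ∈ Finset.HasAntidiagonal.antidiagonal (m + n) := by simp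
  rw [coeff_mul, ← Finset.add_sum_erase _ _ hmn, coeff_mul_C, add_sub_cancel_left]
  refine sum_mem fun x hx => ?_
  obtain ⟨hne, hx⟩ := Finset.mem_erase.mp hx
  rw [Finset.HasAntidiagonal.mem_antidiagonal] at hx
  rw [coeff_mul_C]
  rcases lt_or_ge x.1 m with h1 | h1
  · exact P.mul_mem_right _ _ (P.mul_mem_right _ _ (hf _ h1))
  · have h2 : x.2 < n := by
      by_contra! h2
      exact hne (Prod.ext (by omega) (by omega))
    exact P.mul_mem_left _ _ (hg _ h2)

theorem IsPrimeTwoSided.forall_coeff_mem_or_forall_coeff_mem {R : Type*} [Ring R]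
    {P : TwoSidedIdeal R} (hP : IsPrimeTwoSided P) {f g : R[X]}
    (hfg : ∀ s : R, ∀ k : ℕ, (f * C s * g).coeff k ∈ P) :
    (∀ i, f.coeff i ∈ P) ∨ ∀ j, g.coeff j ∈ P := by
  classical
  by_contra! ⟨hf, hg⟩
  have hmin : ∀ s, f.coeff (Nat.find hf) * s * g.coeff (Nat.find hg) ∈ P := fun s => by
    have hrest := coeff_mul_C_mul_sub_mem P (fun i hi => not_not.mp (Nat.find_min hf hi))
      (fun j hj => not_not.mp (Nat.find_min hg hj)) s
    simpa only [sub_sub_cancel] using P.sub_mem (hfg s (Nat.find hf + Nat.find hg)) hrest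
  exact (hP.2 _ _ hmin).elim (Nat.find_spec hf) (Nat.find_spec hg)

theorem twoPrimal_coeff_mem_primeRadical_general (R : Type*) [Ring R]
    (f g : Polynomial R)
    (hfg : ∀ q : Polynomial R, ∀ k : ℕ, (f * q * g).coeff k ∈ primeRadical R) :
    ∀ i j : ℕ, ∀ r : R, f.coeff i * r * g.coeff j ∈ primeRadical R := by
  intro i j r P hP
  rcases hP.forall_coeff_mem_or_forall_coeff_mem (fun s k => hfg (C s) k P hP) with hf | hg
  · exact P.mul_mem_right _ _ (P.mul_mem_right _ _ (hf i))
  · exact P.mul_mem_left _ _ (hg j)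

theorem twoPrimal_coeff_mem_primeRadical (R : Type*) [Ring R]
    (h2 : IsTwoPrimal R) (f g : Polynomial R)
    (hfg : ∀ q : Polynomial R, ∀ k : ℕ, (f * q * g).coeff k ∈ primeRadical R) :
    ∀ i j : ℕ, ∀ r : R, f.coeff i * r * g.coeff j ∈ primeRadical R :=
  twoPrimal_coeff_mem_primeRadical_general R f g hfg
end

section
/- Let R be a ring in which every nilpotent element x satisfies x^2 = 0 (bounded index of nilpotency 2). If R is strongly nil-IFP, then R is NI, i.e., the set N(R) of nilpotent elements forms a two-sided ideal. -/
private lemma nil_of_sq_nil {R : Type*} [Ring R] {x : R} (hx : IsNilpotent (x * x)) :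
    IsNilpotent x := by
  obtain ⟨n, hn⟩ := hx
  refine ⟨2 * n, ?_⟩
  rw [pow_mul, pow_two, hn]

private lemma mul_left_nil {R : Type*} [Ring R]
    (hidx : ∀ x : R, IsNilpotent x → x ^ 2 = 0) (h : StronglyNilIFP R)
    {a : R} (ha : IsNilpotent a) (r : R) : IsNilpotent (r * a) := by
  have ha2 : a * a = 0 := by have := hidx a ha; rwa [pow_two] at this
  have hfg : (Polynomial.C (r * a)) * (Polynomial.C a) = 0 := by
    rw [← Polynomial.C_mul, mul_assoc, ha2, mul_zero, Polynomial.C_0]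
  have := h _ _ hfg 0 0 r
  simp only [Polynomial.coeff_C_zero] at this
  apply nil_of_sq_nil
  convert this using 1
  noncomm_ring

private lemma mul_right_nil {R : Type*} [Ring R]
    (hidx : ∀ x : R, IsNilpotent x → x ^ 2 = 0) (h : StronglyNilIFP R)
    {a : R} (ha : IsNilpotent a) (r : R) : IsNilpotent (a * r) := by
  have ha2 : a * a = 0 := by have := hidx a ha; rwa [pow_two] at this
  have hfg : (Polynomial.C a) * (Polynomial.C (a * r)) = 0 := by
    rw [← Polynomial.C_mul, ← mul_assoc, ha2, zero_mul, Polynomial.C_0]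
  have := h _ _ hfg 0 0 r
  simp only [Polynomial.coeff_C_zero] at this
  apply nil_of_sq_nil
  exact this

theorem stronglyNilIFP_isNI_of_index_two (R : Type*) [Ring R]
    (hidx : ∀ x : R, IsNilpotent x → x ^ 2 = 0)
    (h : StronglyNilIFP R) :
    ∃ I : TwoSidedIdeal R, ∀ x : R, x ∈ I ↔ IsNilpotent x := by
  have sq0 : ∀ x : R, IsNilpotent x → x * x = 0 := fun x hx => by
    have := hidx x hx; rwa [pow_two] at this
  have add_mem : ∀ {a b : R}, IsNilpotent a → IsNilpotent b → IsNilpotent (a + b) := by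
    intro a b ha hb
    have ha2 : a * a = 0 := sq0 a ha
    have hb2 : b * b = 0 := sq0 b hb
    have hab : (a * b) * (a * b) = 0 := sq0 _ (mul_right_nil hidx h ha b)
    have hba : (b * a) * (b * a) = 0 := sq0 _ (mul_right_nil hidx h hb a)
    have haa : ∀ x : R, a * (a * x) = 0 := fun x => by rw [← mul_assoc, ha2, zero_mul]
    have hbb : ∀ x : R, b * (b * x) = 0 := fun x => by rw [← mul_assoc, hb2, zero_mul]
    have habab : ∀ x : R, a * (b * (a * (b * x))) = 0 := fun x => by
      have e : a * (b * (a * (b * x))) = (a * b) * (a * b) * x := by noncomm_ring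
      rw [e, hab, zero_mul]
    have hbaba : ∀ x : R, b * (a * (b * (a * x))) = 0 := fun x => by
      have e : b * (a * (b * (a * x))) = (b * a) * (b * a) * x := by noncomm_ring
      rw [e, hba, zero_mul]
    refine ⟨6, ?_⟩
    have e6 : (a + b) ^ 6 = (a+b)*((a+b)*((a+b)*((a+b)*((a+b)*(a+b))))) := by
      noncomm_ring
    rw [e6]
    simp [add_mul, mul_add, mul_assoc, ha2, hb2, haa, hbb, habab, hbaba]
  refine ⟨TwoSidedIdeal.mk' {x : R | IsNilpotent x} (IsNilpotent.zero)
    (fun ha hb => add_mem ha hb)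
    (fun ha => ha.neg)
    (fun hb => mul_left_nil hidx h hb _)
    (fun ha => mul_right_nil hidx h ha _), ?_⟩
  intro x
  rw [TwoSidedIdeal.mem_mk']
  rfl
end

section
/- If I is a nilpotent two-sided ideal of a ring R and R/I is strongly nil-IFP, then R is strongly nil-IFP. -/
/-- `Q` plays the role of `R/I`, where `I` is the (two-sided) kernel of the surjective
ring hom `φ`; the hypothesis `hnil` says that `I` is a nilpotent ideal (`I^m = 0`). -/
theorem stronglyNilIFP_of_nilpotent_kernel (R Q : Type*) [Ring R] [Ring Q]
    (φ : R →+* Q) (hsurj : Function.Surjective φ)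
    (hnil : ∃ m : ℕ, 0 < m ∧ ∀ l : List R, l.length = m →
      (∀ x ∈ l, φ x = 0) → l.prod = 0)
    (hQ : StronglyNilIFP Q) :
    StronglyNilIFP R := by
  intro f g hfg i j r
  obtain ⟨m, hm, hker⟩ := hnil
  have h0 : (f.map φ) * (g.map φ) = 0 := by
    rw [← Polynomial.map_mul, hfg, Polynomial.map_zero]
  obtain ⟨n, hn⟩ := hQ (f.map φ) (g.map φ) h0 i j (φ r)
  simp only [Polynomial.coeff_map] at hn
  have key : φ ((f.coeff i * r * g.coeff j) ^ n) = 0 := by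
    rw [map_pow, map_mul, map_mul, hn]
  refine ⟨n * m, ?_⟩
  have := hker (List.replicate m ((f.coeff i * r * g.coeff j) ^ n)) (by simp)
    (by intro x hx; rw [List.eq_of_mem_replicate hx]; exact key)
  rw [List.prod_replicate] at this
  rw [pow_mul]
  exact this
end

section
/- For a ring R and n ≥ 2, if R is strongly nil-IFP then the ring U_n(R) of n×n upper triangular matrices over R is strongly nil-IFP. -/
/-- The ring `U_n(R)` of upper triangular `n × n` matrices over `R`, as a subring
of the full matrix ring. -/
def upperTriangular (n : ℕ) (R : Type*) [Ring R] :
    Subring (Matrix (Fin n) (Fin n) R) where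
  carrier := { M | ∀ i j : Fin n, j < i → M i j = 0 }
  zero_mem' := by intro i j hij; rfl
  one_mem' := by
    intro i j hij
    simp [Matrix.one_apply, (ne_of_lt hij).symm]
  add_mem' := by
    intro M N hM hN i j hij
    simp [Matrix.add_apply, hM i j hij, hN i j hij]
  neg_mem' := by
    intro M hM i j hij
    simp [Matrix.neg_apply, hM i j hij]
  mul_mem' := by
    intro M N hM hN i j hij
    simp only [Matrix.mul_apply]
    apply Finset.sum_eq_zero
    intro k _
    rcases le_or_gt i k with hk | hk
    · rw [hN k j (lt_of_lt_of_le hij hk), mul_zero]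
    · rw [hM i k hk, zero_mul]

/-!
A polynomial identity `f g = 0` over `U_n(R)` projects to an identity over `R` along each
diagonal entry, so every diagonal entry of `a s b` is nilpotent. A common power of `a s b`
then has zero diagonal, hence is strictly upper triangular, and its `n`-th power vanishes.
-/

theorem StronglyNilIFP.of_ringHoms {S ι : Type*} [Ring S] {R : ι → Type*} [∀ i, Ring (R i)]
    (φ : ∀ i, S →+* R i) (hφ : ∀ x, (∀ i, IsNilpotent (φ i x)) → IsNilpotent x)
    (hR : ∀ i, StronglyNilIFP (R i)) : StronglyNilIFP S := by
  intro f g hfg p q s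
  refine hφ _ fun i => ?_
  have hmap : f.map (φ i) * g.map (φ i) = 0 := by
    rw [← Polynomial.map_mul, hfg, Polynomial.map_zero]
  simpa only [map_mul, Polynomial.coeff_map] using hR i _ _ hmap p q (φ i s)

theorem exists_pow_eq_zero_of_forall_isNilpotent {ι M : Type*} [Finite ι] [MonoidWithZero M]
    (x : ι → M) (hx : ∀ i, IsNilpotent (x i)) : ∃ m : ℕ, ∀ i, x i ^ m = 0 := by
  cases nonempty_fintype ι
  choose e he using hx
  exact ⟨Finset.univ.sup e, fun i => pow_eq_zero_of_le (Finset.le_sup (Finset.mem_univ i)) (he i)⟩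

theorem Matrix.pow_eq_zero_of_apply_eq_zero_of_le {R : Type*} [Semiring R] {n : ℕ}
    (N : Matrix (Fin n) (Fin n) R) (hN : ∀ i j : Fin n, j ≤ i → N i j = 0) : N ^ n = 0 := by
  -- `N ^ k` vanishes below the `k`-th superdiagonal.
  have hpow : ∀ k : ℕ, ∀ i j : Fin n, (j : ℕ) < i + k → (N ^ k) i j = 0 := by
    intro k
    induction k with
    | zero =>
      intro i j hij
      exact Matrix.one_apply_ne (by omega)
    | succ k ih =>
      intro i j hij
      rw [pow_succ', Matrix.mul_apply]
      refine Finset.sum_eq_zero fun l _ => ?_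
      rcases le_or_gt l i with hl | hl
      · rw [hN i l hl, zero_mul]
      · rw [ih l j (by omega), mul_zero]
  ext i j
  exact hpow n i j (by omega)

namespace upperTriangular

variable {n : ℕ} {R : Type*} [Ring R]

def diagEntry (k : Fin n) : upperTriangular n R →+* R where
  toFun M := M.val k k
  map_one' := Matrix.one_apply_eq k
  map_zero' := rfl
  map_add' _ _ := rfl
  map_mul' M N := by
    change (M.val * N.val) k k = _
    rw [Matrix.mul_apply, Finset.sum_eq_single_of_mem k (Finset.mem_univ k)]
    intro l _ hlk
    rcases lt_or_gt_of_ne hlk with hl | hl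
    · rw [M.2 k l hl, zero_mul]
    · rw [N.2 l k hl, mul_zero]

theorem isNilpotent_of_forall_isNilpotent_diagEntry (M : upperTriangular n R)
    (hM : ∀ k, IsNilpotent (diagEntry k M)) : IsNilpotent M := by
  obtain ⟨m, hm⟩ := exists_pow_eq_zero_of_forall_isNilpotent _ hM
  have hstrict : ∀ i j : Fin n, j ≤ i → (M ^ m).val i j = 0 := by
    intro i j hji
    rcases hji.lt_or_eq with hlt | rfl
    · exact (M ^ m).2 i j hlt
    · rw [← hm j, ← map_pow]
      rfl
  refine ⟨m * n, Subtype.ext ?_⟩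
  rw [pow_mul, SubmonoidClass.coe_pow]
  exact Matrix.pow_eq_zero_of_apply_eq_zero_of_le _ hstrict

end upperTriangular

theorem stronglyNilIFP_upperTriangular_general (R : Type*) [Ring R] (n : ℕ)
    (h : StronglyNilIFP R) :
    StronglyNilIFP (upperTriangular n R) :=
  StronglyNilIFP.of_ringHoms upperTriangular.diagEntry
    upperTriangular.isNilpotent_of_forall_isNilpotent_diagEntry fun _ => h

theorem stronglyNilIFP_upperTriangular (R : Type*) [Ring R] (n : ℕ) (hn : 2 ≤ n)
    (h : StronglyNilIFP R) :
    StronglyNilIFP (upperTriangular n R) :=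
  stronglyNilIFP_upperTriangular_general R n h
end

section
/- Let R be strongly nil-IFP and suppose N(R)[x] = N(R[x]) (the nilpotent elements of R[x] are exactly the polynomials with all coefficients nilpotent). Then R[x] is strongly nil-IFP. -/
open Polynomial

section Aux
variable {R : Type*} [Ring R]

lemma nilp_add_of_hnilp
    (hnilp : ∀ f : Polynomial R, IsNilpotent f ↔ ∀ i : ℕ, IsNilpotent (f.coeff i))
    {a b : R} (ha : IsNilpotent a) (hb : IsNilpotent b) : IsNilpotent (a + b) := by
  have hp : IsNilpotent (monomial 0 a + monomial 1 b) := by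
    rw [hnilp]
    intro i
    match i with
    | 0 => simpa using ha
    | 1 => simpa using hb
    | (n+2) => simp [coeff_monomial]
  have := hp.map (eval₂RingHom' (RingHom.id R) 1 (fun a => Commute.one_right a))
  simpa [eval₂RingHom', eval₂_monomial] using this

lemma nilp_sum_of_hnilp
    (hnilp : ∀ f : Polynomial R, IsNilpotent f ↔ ∀ i : ℕ, IsNilpotent (f.coeff i))
    {ι : Type*} (s : Finset ι) (F : ι → R) (hF : ∀ i ∈ s, IsNilpotent (F i)) :
    IsNilpotent (∑ i ∈ s, F i) :=
  Finset.sum_induction F IsNilpotent (fun _ _ => nilp_add_of_hnilp hnilp)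
    (IsNilpotent.zero) hF

lemma eval2_coeff (f : Polynomial (Polynomial R)) (k i m : ℕ)
    (hk : ∀ n, (f.coeff n).natDegree < k) (hm : m < k) :
    (f.eval₂ (RingHom.id (Polynomial R)) (X ^ k)).coeff (i * k + m) = (f.coeff i).coeff m := by
  rw [eval₂_eq_sum, Polynomial.sum, finset_sum_coeff]
  have key : ∀ n ∈ f.support,
      ((RingHom.id (Polynomial R)) (f.coeff n) * (X ^ k) ^ n).coeff (i * k + m)
        = if n = i then (f.coeff i).coeff m else 0 := by
    intro n _
    rw [RingHom.id_apply, ← pow_mul, coeff_mul_X_pow']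
    have hcomm : k * n = n * k := Nat.mul_comm k n
    split_ifs with h1 h2 h2
    · subst h2
      congr 1
      omega
    · apply coeff_eq_zero_of_natDegree_lt
      have hd := hk n
      have hni : n < i := by
        rcases lt_or_ge n i with hlt | hge
        · exact hlt
        · exfalso
          have h3 : i + 1 ≤ n := by omega
          have h5 : (i + 1) * k ≤ n * k := Nat.mul_le_mul_right k h3
          have h6 : (i + 1) * k = i * k + k := by ring
          omega
      have h4 : (n + 1) * k ≤ i * k := Nat.mul_le_mul_right k hni
      have h6 : (n + 1) * k = n * k + k := by ring
      omega
    · exfalso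
      subst h2
      exact h1 (by omega)
    · rfl
  rw [Finset.sum_congr rfl key, Finset.sum_ite_eq' f.support i]
  split_ifs with h
  · rfl
  · rw [Polynomial.notMem_support_iff.mp h]; simp

end Aux

theorem stronglyNilIFP_polynomial (R : Type*) [Ring R]
    (h : StronglyNilIFP R)
    (hnilp : ∀ f : Polynomial R, IsNilpotent f ↔ ∀ i : ℕ, IsNilpotent (f.coeff i)) :
    StronglyNilIFP (Polynomial R) := by
  intro f g hfg i j s
  classical
  set kf := f.support.sup (fun n => (f.coeff n).natDegree) with hkf'
  set kg := g.support.sup (fun n => (g.coeff n).natDegree) with hkg'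
  set k := kf + kg + 1 with hk'
  have hkf : ∀ n, (f.coeff n).natDegree < k := by
    intro n
    by_cases hn : n ∈ f.support
    · have h2 : (f.coeff n).natDegree ≤ kf := by rw [hkf']; exact Finset.le_sup (f := fun n => (f.coeff n).natDegree) hn
      omega
    · rw [Polynomial.notMem_support_iff.mp hn]
      simp only [natDegree_zero]
      omega
  have hkg : ∀ n, (g.coeff n).natDegree < k := by
    intro n
    by_cases hn : n ∈ g.support
    · have h2 : (g.coeff n).natDegree ≤ kg := by rw [hkg']; exact Finset.le_sup (f := fun n => (g.coeff n).natDegree) hn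
      omega
    · rw [Polynomial.notMem_support_iff.mp hn]
      simp only [natDegree_zero]
      omega
  set Φ : Polynomial (Polynomial R) →+* Polynomial R :=
    eval₂RingHom' (RingHom.id (Polynomial R)) (X ^ k)
      (fun p => ((commute_X p).symm.pow_right k)) with hΦ
  have hΦapp : ∀ q : Polynomial (Polynomial R),
      Φ q = q.eval₂ (RingHom.id (Polynomial R)) (X ^ k) := fun _ => rfl
  have hFG : Φ f * Φ g = 0 := by rw [← map_mul, hfg, map_zero]
  have hterm : ∀ (p v : ℕ) (r : R),
      IsNilpotent ((f.coeff i).coeff p * r * (g.coeff j).coeff v) := by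
    intro p v r
    by_cases hp : p < k
    · by_cases hv : v < k
      · have e1 : (f.coeff i).coeff p = (Φ f).coeff (i * k + p) := by
          rw [hΦapp, eval2_coeff f k i p hkf hp]
        have e2 : (g.coeff j).coeff v = (Φ g).coeff (j * k + v) := by
          rw [hΦapp, eval2_coeff g k j v hkg hv]
        rw [e1, e2]
        exact h (Φ f) (Φ g) hFG (i * k + p) (j * k + v) r
      · have hz : (g.coeff j).coeff v = 0 := by
          apply coeff_eq_zero_of_natDegree_lt
          have := hkg j
          omega
        rw [hz, mul_zero]
        exact IsNilpotent.zero
    · have hz : (f.coeff i).coeff p = 0 := by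
        apply coeff_eq_zero_of_natDegree_lt
        have := hkf i
        omega
      rw [hz, zero_mul, zero_mul]
      exact IsNilpotent.zero
  rw [hnilp]
  intro t
  rw [coeff_mul]
  apply nilp_sum_of_hnilp hnilp
  intro uv _
  rw [coeff_mul, Finset.sum_mul]
  apply nilp_sum_of_hnilp hnilp
  intro pq _
  exact hterm pq.1 uv.2 (s.coeff pq.2)
end

section
/- Let S be a multiplicatively closed set of central regular elements of a ring R. If R is strongly nil-IFP, then S^{-1}R is strongly nil-IFP. -/
section Aux

variable {R Q : Type*} [Ring R] [Ring Q] (S : Submonoid R) (φ : R →+* Q)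

/-- elements of `φ '' S` are central in `Q`. -/
lemma aux_central (hcen : ∀ s ∈ S, ∀ r : R, s * r = r * s)
    (hunit : ∀ s ∈ S, IsUnit (φ s))
    (hloc : ∀ q : Q, ∃ s ∈ S, ∃ a : R, φ s * q = φ a) :
    ∀ s ∈ S, ∀ q : Q, φ s * q = q * φ s := by
  intro s hs q
  obtain ⟨t, ht, b, hb⟩ := hloc q
  have hu := hunit t ht
  apply hu.mul_left_cancel
  have h1 : φ t * (φ s * q) = φ s * (φ t * q) := by
    rw [← mul_assoc, ← map_mul, ← hcen s hs t, map_mul, mul_assoc]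
  calc φ t * (φ s * q) = φ s * φ b := by rw [h1, hb]
    _ = φ b * φ s := by rw [← map_mul, ← map_mul, hcen s hs b]
    _ = φ t * (q * φ s) := by rw [← hb, mul_assoc]

/-- Common denominator for the coefficients of a polynomial over `Q`. -/
lemma aux_denom (hcen : ∀ s ∈ S, ∀ r : R, s * r = r * s)
    (hunit : ∀ s ∈ S, IsUnit (φ s))
    (hloc : ∀ q : Q, ∃ s ∈ S, ∃ a : R, φ s * q = φ a)
    (f : Polynomial Q) :
    ∃ s ∈ S, ∃ f' : Polynomial R, ∀ i, φ s * f.coeff i = φ (f'.coeff i) := by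
  have hcenQ := aux_central S φ hcen hunit hloc
  have H : ∀ N : ℕ, ∃ s ∈ S, ∀ i < N, ∃ a : R, φ s * f.coeff i = φ a := by
    intro N
    induction N with
    | zero => exact ⟨1, S.one_mem, fun i hi => absurd hi (Nat.not_lt_zero i)⟩
    | succ n ih =>
      obtain ⟨s, hs, hsp⟩ := ih
      obtain ⟨t, ht, b, hb⟩ := hloc (f.coeff n)
      refine ⟨t * s, S.mul_mem ht hs, fun i hi => ?_⟩
      rcases Nat.lt_or_ge i n with h | h
      · obtain ⟨a, ha⟩ := hsp i h
        exact ⟨t * a, by rw [map_mul, mul_assoc, ha, ← map_mul]⟩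
      · have hin : i = n := by omega
        subst hin
        refine ⟨b * s, ?_⟩
        rw [map_mul, mul_assoc, hcenQ s hs (f.coeff i), ← mul_assoc, hb,
          ← map_mul]
  obtain ⟨s, hs, hsp⟩ := H (f.natDegree + 1)
  set N := f.natDegree + 1 with hN
  classical
  let a : ℕ → R := fun i => if h : i < N then (hsp i h).choose else 0
  refine ⟨s, hs, ∑ i ∈ Finset.range N, Polynomial.monomial i (a i), fun i => ?_⟩
  have hcoeff : (∑ k ∈ Finset.range N, Polynomial.monomial k (a k)).coeff i
      = if i ∈ Finset.range N then a i else 0 := by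
    rw [Polynomial.finset_sum_coeff]
    simp only [Polynomial.coeff_monomial]
    exact Finset.sum_ite_eq' (Finset.range N) i a
  rw [hcoeff]
  by_cases h : i < N
  · simp only [Finset.mem_range, h, if_true]
    have := (hsp i h).choose_spec
    simpa [a, h] using this
  · simp only [Finset.mem_range, h, if_false]
    have hz : f.coeff i = 0 := by
      apply Polynomial.coeff_eq_zero_of_natDegree_lt
      omega
    simp [hz]

end Aux

/-- `Q` plays the role of the localization `S⁻¹R` of `R` at a multiplicatively closed
set `S` of central regular elements, witnessed by the ring hom `φ`. -/
theorem stronglyNilIFP_localization (R Q : Type*) [Ring R] [Ring Q]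
    (S : Submonoid R)
    (hcen : ∀ s ∈ S, ∀ r : R, s * r = r * s)
    (hregS : ∀ s ∈ S, ∀ x : R, (s * x = 0 → x = 0) ∧ (x * s = 0 → x = 0))
    (φ : R →+* Q)
    (hunit : ∀ s ∈ S, IsUnit (φ s))
    (hinj : ∀ x : R, φ x = 0 → x = 0)
    (hloc : ∀ q : Q, ∃ s ∈ S, ∃ a : R, φ s * q = φ a)
    (hR : StronglyNilIFP R) :
    StronglyNilIFP Q := by
  have hcenQ := aux_central S φ hcen hunit hloc
  intro f g hfg i j r
  obtain ⟨s, hs, f', hf'⟩ := aux_denom S φ hcen hunit hloc f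
  obtain ⟨t, ht, g', hg'⟩ := aux_denom S φ hcen hunit hloc g
  have hmapf : f'.map φ = Polynomial.C (φ s) * f := by
    ext k
    rw [Polynomial.coeff_map, Polynomial.coeff_C_mul, hf' k]
  have hmapg : g'.map φ = Polynomial.C (φ t) * g := by
    ext k
    rw [Polynomial.coeff_map, Polynomial.coeff_C_mul, hg' k]
  have hcommCt : Polynomial.C (φ t) * f = f * Polynomial.C (φ t) := by
    ext k
    rw [Polynomial.coeff_C_mul, Polynomial.coeff_mul_C, hcenQ t ht]
  have hmap0 : (f' * g').map φ = 0 := by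
    rw [Polynomial.map_mul, hmapf, hmapg, ← mul_assoc,
      mul_assoc (Polynomial.C (φ s)) f (Polynomial.C (φ t)), ← hcommCt,
      ← mul_assoc, mul_assoc, hfg, mul_zero]
  have hfg' : f' * g' = 0 := by
    ext k
    have : φ ((f' * g').coeff k) = 0 := by
      have h2 := congrArg (fun p => Polynomial.coeff p k) hmap0
      simp only [Polynomial.coeff_map, Polynomial.coeff_zero] at h2
      exact h2
    exact hinj _ this
  obtain ⟨u, hu, c, hc⟩ := hloc r
  have hnilR := hR f' g' hfg' i j c
  have hnilQ : IsNilpotent (φ (f'.coeff i * c * g'.coeff j)) := hnilR.map φ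
  -- rewrite the image as (central unit) * (goal element)
  have swap : ∀ (z : Q), (∀ q : Q, z * q = q * z) → ∀ x y : Q,
      x * (z * y) = z * (x * y) := by
    intro z hz x y
    rw [← mul_assoc, ← hz x, mul_assoc]
  have key : φ (f'.coeff i * c * g'.coeff j)
      = (φ s * (φ u * φ t)) * (f.coeff i * r * g.coeff j) := by
    have e1 : φ (f'.coeff i) = φ s * f.coeff i := (hf' i).symm
    have e2 : φ c = φ u * r := hc.symm
    have e3 : φ (g'.coeff j) = φ t * g.coeff j := (hg' j).symm
    rw [map_mul, map_mul, e1, e2, e3]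
    simp only [mul_assoc]
    rw [swap (φ u) (hcenQ u hu) (f.coeff i),
      swap (φ t) (hcenQ t ht) r,
      swap (φ t) (hcenQ t ht) (f.coeff i)]
  rw [key] at hnilQ
  -- cancel the central unit
  obtain ⟨n, hn⟩ := hnilQ
  set w : Q := φ s * (φ u * φ t) with hw
  have hwcen : ∀ q : Q, w * q = q * w := by
    intro q
    have h1 : (φ u * φ t) * q = q * (φ u * φ t) := by
      rw [mul_assoc, hcenQ t ht, ← mul_assoc, hcenQ u hu, mul_assoc]
    rw [hw, mul_assoc, h1, ← mul_assoc, hcenQ s hs, mul_assoc]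
  have hwunit : IsUnit w := ((hunit s hs).mul ((hunit u hu).mul (hunit t ht)))
  refine ⟨n, ?_⟩
  have hcomm : Commute w (f.coeff i * r * g.coeff j) := hwcen _
  rw [hcomm.mul_pow] at hn
  exact ((hwunit.pow n).mul_right_eq_zero).mp hn
end

section
/- Let R be a ring with ideals I_1, ..., I_k such that each quotient R/I_l is strongly nil-IFP and the intersection of I_1, ..., I_k is zero. Then R is strongly nil-IFP. -/
/-- `R` is a finite subdirect product of the rings `Q l ≅ R/I_l`, where
`I_l = ker (φ l)` and `⋂ I_l = 0`. -/
theorem stronglyNilIFP_subdirect (R : Type*) [Ring R] (k : ℕ)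
    (Q : Fin k → Type*) [∀ l, Ring (Q l)]
    (φ : ∀ l, R →+* Q l) (hsurj : ∀ l, Function.Surjective (φ l))
    (hQ : ∀ l, StronglyNilIFP (Q l))
    (hint : ∀ x : R, (∀ l, φ l x = 0) → x = 0) :
    StronglyNilIFP R := by
  intro f g hfg i j r
  set x := f.coeff i * r * g.coeff j with hx
  have hnil : ∀ l, IsNilpotent (φ l x) := by
    intro l
    have h0 : (f.map (φ l)) * (g.map (φ l)) = 0 := by
      rw [← Polynomial.map_mul, hfg, Polynomial.map_zero]
    have := hQ l (f.map (φ l)) (g.map (φ l)) h0 i j (φ l r)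
    simpa [Polynomial.coeff_map, hx, map_mul] using this
  choose n hn using hnil
  refine ⟨Finset.univ.sup n, hint _ fun l => ?_⟩
  rw [map_pow]
  exact pow_eq_zero_of_le (Finset.le_sup (Finset.mem_univ l)) (hn l)
end

section
/- Let R be an algebra over a commutative domain S and let D = R ⊕ S be the Dorroh extension with multiplication (r1, s1)(r2, s2) = (r1 r2 + s1 r2 + s2 r1, s1 s2). If R is weakly semicommutative, then D is weakly semicommutative: (r1, s1)(r2, s2) = 0 in D implies (r1, s1)(a, b)(r2, s2) is nilpotent for all (a, b) in D. -/
/-!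
Commutative rings are weakly semicommutative, and the property passes to products and
to subrings. Since `R` has a unit, `(s, r) ↦ (s, s • 1 + r)` embeds the Dorroh extension
`Unitization S R` into the product ring `S × R`.
-/

theorem Prod.isNilpotent_mk {M N : Type*} [MonoidWithZero M] [MonoidWithZero N] {a : M} {b : N}
    (ha : IsNilpotent a) (hb : IsNilpotent b) : IsNilpotent (a, b) := by
  obtain ⟨m, hm⟩ := ha
  obtain ⟨n, hn⟩ := hb
  exact ⟨max m n, Prod.ext (pow_eq_zero_of_le (le_max_left m n) hm)
    (pow_eq_zero_of_le (le_max_right m n) hn)⟩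

namespace WeaklySemicommutative

theorem of_commRing (R : Type*) [CommRing R] : WeaklySemicommutative R := by
  intro a b hab r
  rw [mul_right_comm, hab, zero_mul]
  exact IsNilpotent.zero

theorem prod {R R' : Type*} [Ring R] [Ring R'] (hR : WeaklySemicommutative R)
    (hR' : WeaklySemicommutative R') : WeaklySemicommutative (R × R') := by
  intro a b hab r
  exact Prod.isNilpotent_mk (hR _ _ (congrArg Prod.fst hab) r.1)
    (hR' _ _ (congrArg Prod.snd hab) r.2)

theorem of_injective_s18 {R R' : Type*} [Ring R] [Ring R'] (hR' : WeaklySemicommutative R')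
    (f : R →+* R') (hf : Function.Injective f) : WeaklySemicommutative R := by
  intro a b hab r
  rw [← IsNilpotent.map_iff hf, map_mul, map_mul]
  exact hR' _ _ (by rw [← map_mul, hab, map_zero]) _

end WeaklySemicommutative

namespace Unitization

variable (S R : Type*) [CommSemiring S] [Ring R] [Algebra S R]

def embedProd : Unitization S R →ₐ[S] S × R :=
  (fstHom S R).prod (lift (NonUnitalAlgHom.id S R))

variable {S R}

theorem embedProd_apply (x : Unitization S R) :
    embedProd S R x = (x.fst, algebraMap S R x.fst + x.snd) :=
  rfl

theorem embedProd_injective : Function.Injective (embedProd S R) := by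
  intro x y hxy
  simp only [embedProd_apply, Prod.mk.injEq] at hxy
  obtain ⟨hfst, hsnd⟩ := hxy
  rw [hfst, add_right_inj] at hsnd
  exact Unitization.ext hfst hsnd

end Unitization

theorem weaklySemicommutative_dorroh_general (S R : Type*) [CommRing S]
    [Ring R] [Algebra S R]
    (hR : WeaklySemicommutative R) :
    ∀ x y : Unitization S R, x * y = 0 →
      ∀ z : Unitization S R, IsNilpotent (x * z * y) :=
  ((WeaklySemicommutative.of_commRing S).prod hR).of_injective_s18
    (Unitization.embedProd S R : Unitization S R →+* S × R) Unitization.embedProd_injective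

/-- The Dorroh extension `D = R ⊕ S` of an algebra `R` over a commutative domain `S`,
with multiplication `(r₁, s₁)(r₂, s₂) = (r₁r₂ + s₁r₂ + s₂r₁, s₁s₂)`, is Mathlib's
`Unitization S R`. -/
theorem weaklySemicommutative_dorroh (S R : Type*) [CommRing S] [IsDomain S]
    [Ring R] [Algebra S R]
    (hR : WeaklySemicommutative R) :
    ∀ x y : Unitization S R, x * y = 0 →
      ∀ z : Unitization S R, IsNilpotent (x * z * y) :=
  weaklySemicommutative_dorroh_general S R hR
end
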